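/- arXiv:1209.0414 — 7 statements merged into one kernel-verified Lean document; each statement's English description precedes it below -/
import Mathlib

section
/- The category of 2-degenerate 3-computads has all binary products, and on 2-cells the product is the cartesian product of the 2-cell sets. -/
open CategoryTheory

/-- A 2-degenerate 3-computad: a single 0-cell, no 1-cells, so the data is a set of
2-cells, a set of 3-cells, and boundary maps into the free commutative monoid
(multisets) on the 2-cells. -/
structure DegComputad where
  C2 : Type
  C3 : Type
  src : C3 → Multiset C2
  tgt : C3 → Multiset C2

/-- Morphisms of 2-degenerate 3-computads. -/
@[ext]
structure DegComputad.Hom (A B : DegComputad) where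
  f2 : A.C2 → B.C2
  f3 : A.C3 → B.C3
  src_comm : ∀ e, B.src (f3 e) = Multiset.map f2 (A.src e)
  tgt_comm : ∀ e, B.tgt (f3 e) = Multiset.map f2 (A.tgt e)

instance : Category DegComputad where
  Hom := DegComputad.Hom
  id A := ⟨id, id, by simp, by simp⟩
  comp f g := ⟨g.f2 ∘ f.f2, g.f3 ∘ f.f3,
    by intro e; simp [f.src_comm, g.src_comm, Multiset.map_map],
    by intro e; simp [f.tgt_comm, g.tgt_comm, Multiset.map_map]⟩

@[simp] lemma DegComputad.id_f2 (A : DegComputad) : (𝟙 A : A ⟶ A).f2 = id := rfl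
@[simp] lemma DegComputad.id_f3 (A : DegComputad) : (𝟙 A : A ⟶ A).f3 = id := rfl
@[simp] lemma DegComputad.comp_f2 {A B C : DegComputad} (f : A ⟶ B) (g : B ⟶ C) :
    (f ≫ g).f2 = g.f2 ∘ f.f2 := rfl
@[simp] lemma DegComputad.comp_f3 {A B C : DegComputad} (f : A ⟶ B) (g : B ⟶ C) :
    (f ≫ g).f3 = g.f3 ∘ f.f3 := rfl

open CategoryTheory.Limits

/-!
The product has 2-cells `A.C2 × B.C2`. Since a boundary in the product is a multiset of
pairs, a 3-cell over `(a, b)` must record its own source and target multisets, constrained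
only by their marginals being the boundaries of `a` and `b`; a morphism into the product then
determines these multisets as the images of the boundaries of its domain.
-/

namespace DegComputad

variable {A B X : DegComputad}

@[ext]
structure ProdCell3 (A B : DegComputad) where
  fst : A.C3
  snd : B.C3
  src : Multiset (A.C2 × B.C2)
  tgt : Multiset (A.C2 × B.C2)
  src_map_fst : src.map Prod.fst = A.src fst
  src_map_snd : src.map Prod.snd = B.src snd
  tgt_map_fst : tgt.map Prod.fst = A.tgt fst
  tgt_map_snd : tgt.map Prod.snd = B.tgt snd

def prod (A B : DegComputad) : DegComputad :=
  ⟨A.C2 × B.C2, ProdCell3 A B, ProdCell3.src, ProdCell3.tgt⟩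

def prodFst (A B : DegComputad) : prod A B ⟶ A :=
  ⟨Prod.fst, ProdCell3.fst, fun e => e.src_map_fst.symm, fun e => e.tgt_map_fst.symm⟩

def prodSnd (A B : DegComputad) : prod A B ⟶ B :=
  ⟨Prod.snd, ProdCell3.snd, fun e => e.src_map_snd.symm, fun e => e.tgt_map_snd.symm⟩

def prodLift (u : X ⟶ A) (v : X ⟶ B) : X ⟶ prod A B where
  f2 x := (u.f2 x, v.f2 x)
  f3 e :=
    { fst := u.f3 e
      snd := v.f3 e
      src := (X.src e).map fun x => (u.f2 x, v.f2 x)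
      tgt := (X.tgt e).map fun x => (u.f2 x, v.f2 x)
      src_map_fst := by simp [Multiset.map_map, u.src_comm]
      src_map_snd := by simp [Multiset.map_map, v.src_comm]
      tgt_map_fst := by simp [Multiset.map_map, u.tgt_comm]
      tgt_map_snd := by simp [Multiset.map_map, v.tgt_comm] }
  src_comm _ := rfl
  tgt_comm _ := rfl

@[simp]
lemma prodLift_fst (u : X ⟶ A) (v : X ⟶ B) : prodLift u v ≫ prodFst A B = u := rfl

@[simp]
lemma prodLift_snd (u : X ⟶ A) (v : X ⟶ B) : prodLift u v ≫ prodSnd A B = v := rfl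

lemma prod_hom_ext {m m' : X ⟶ prod A B} (hfst : m ≫ prodFst A B = m' ≫ prodFst A B)
    (hsnd : m ≫ prodSnd A B = m' ≫ prodSnd A B) : m = m' := by
  have hf2 : m.f2 = m'.f2 := funext fun x =>
    Prod.ext (congrFun (congrArg Hom.f2 hfst) x) (congrFun (congrArg Hom.f2 hsnd) x)
  refine Hom.ext hf2 (funext fun e => ProdCell3.ext ?_ ?_ ?_ ?_)
  · exact congrFun (congrArg Hom.f3 hfst) e
  · exact congrFun (congrArg Hom.f3 hsnd) e
  · exact (m.src_comm e).trans (hf2 ▸ (m'.src_comm e).symm)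
  · exact (m.tgt_comm e).trans (hf2 ▸ (m'.tgt_comm e).symm)

def prodIsLimit (A B : DegComputad) : IsLimit (BinaryFan.mk (prodFst A B) (prodSnd A B)) :=
  BinaryFan.isLimitMk (fun t => prodLift t.fst t.snd) (fun _ => prodLift_fst _ _)
    (fun _ => prodLift_snd _ _)
    (fun _ _ hfst hsnd => prod_hom_ext (hfst.trans (prodLift_fst _ _).symm)
      (hsnd.trans (prodLift_snd _ _).symm))

end DegComputad

/-- The category of 2-degenerate 3-computads has all binary products, and on 2-cells
the product is the cartesian product of the 2-cell sets (via the projections). -/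
theorem stmt2 (A B : DegComputad) :
    ∃ (P : DegComputad) (p : P ⟶ A) (q : P ⟶ B),
      Nonempty (IsLimit (BinaryFan.mk p q)) ∧
      Function.Bijective (fun x : P.C2 => (p.f2 x, q.f2 x)) :=
  ⟨DegComputad.prod A B, DegComputad.prodFst A B, DegComputad.prodSnd A B,
    ⟨DegComputad.prodIsLimit A B⟩, Function.bijective_id⟩ -- `(x.1, x.2)` is `x` by eta
end

section
/- Let A be the 2-degenerate 3-computad with three 2-cells a₁,a₂,a₃ and one 3-cell f with source a₁·a₂ and target a₃, and let B be an isomorphic copy with 2-cells b₁,b₂,b₃ and one 3-cell g with source b₁·b₂ and target b₃. Then the categorical product A × B in the category of 2-degenerate 3-computads has nine 2-cells (aᵢ,bⱼ) and exactly two 3-cells: one with source (a₁,b₁)·(a₂,b₂) and one with source (a₂,b₁)·(a₁,b₂), both with target (a₃,b₃). -/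
open CategoryTheory

/-- The computad `A`: 2-cells `a₁,a₂,a₃` (as `0,1,2`), one 3-cell `f : a₁·a₂ → a₃`. -/
abbrev CompA : DegComputad := ⟨Fin 3, Unit, fun _ => {0, 1}, fun _ => {2}⟩

/-- The computad `B`: an isomorphic copy of `A`, with 2-cells `b₁,b₂,b₃` and
one 3-cell `g : b₁·b₂ → b₃`. -/
abbrev CompB : DegComputad := ⟨Fin 3, Unit, fun _ => {0, 1}, fun _ => {2}⟩

/-- The putative product `A × B`: nine 2-cells `(aᵢ,bⱼ)` and two 3-cells
`(f,g)₁ : (a₁,b₁)·(a₂,b₂) → (a₃,b₃)` and `(f,g)₂ : (a₂,b₁)·(a₁,b₂) → (a₃,b₃)`. -/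
abbrev CompAB : DegComputad :=
  ⟨Fin 3 × Fin 3, Fin 2,
   fun e => if e = 0 then {((0 : Fin 3), (0 : Fin 3)), (1, 1)} else {(1, 0), (0, 1)},
   fun _ => {(2, 2)}⟩

/-- First projection `A × B ⟶ A`. -/
def projA : CompAB ⟶ CompA :=
  ⟨Prod.fst, fun _ => (), by decide, by decide⟩

/-- Second projection `A × B ⟶ B`. -/
def projB : CompAB ⟶ CompB :=
  ⟨Prod.snd, fun _ => (), by decide, by decide⟩

open CategoryTheory.Limits

/-!
A morphism `T ⟶ A × B` must send a 2-cell `t` to `(p t, q t)`, and a 3-cell `e` to a 3-cell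
whose source is the image of `src e`: a multiset of pairs with marginals `a₁·a₂` and `b₁·b₂`.
Such a multiset is one of the two matchings `(a₁,b₁)·(a₂,b₂)` and `(a₂,b₁)·(a₁,b₂)`, which are
precisely the (distinct) sources of the two 3-cells of `CompAB`; so the image of `e` exists and is
unique. Targets are forced in the same way, with a single possible matching `(a₃,b₃)`.
-/

namespace Multiset

variable {α β : Type*}

theorem pair_eq_pair_iff {x y a b : α} :
    ({x, y} : Multiset α) = {a, b} ↔ x = a ∧ y = b ∨ x = b ∧ y = a := by
  refine ⟨fun h => ?_, ?_⟩
  · rcases cons_eq_cons.1 h with ⟨rfl, hyb⟩ | ⟨-, cs, hy, hb⟩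
    · exact .inl ⟨rfl, singleton_inj.1 hyb⟩
    · obtain ⟨rfl, -⟩ := (singleton_eq_cons_iff _).1 hy
      obtain ⟨rfl, -⟩ := (singleton_eq_cons_iff _).1 hb
      exact .inr ⟨rfl, rfl⟩
  · rintro (⟨rfl, rfl⟩ | ⟨rfl, rfl⟩)
    · rfl
    · exact pair_comm _ _

theorem eq_singleton_of_map_fst_of_map_snd {M : Multiset (α × β)} {a : α} {b : β}
    (h₁ : M.map Prod.fst = {a}) (h₂ : M.map Prod.snd = {b}) : M = {(a, b)} := by
  obtain ⟨u, rfl, rfl⟩ := map_eq_singleton.1 h₁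
  rw [map_singleton, singleton_inj] at h₂
  rw [← h₂]

theorem eq_pair_or_eq_pair_of_map_fst_of_map_snd {M : Multiset (α × β)} {a a' : α} {b b' : β}
    (h₁ : M.map Prod.fst = {a, a'}) (h₂ : M.map Prod.snd = {b, b'}) :
    M = {(a, b), (a', b')} ∨ M = {(a', b), (a, b')} := by
  obtain ⟨⟨u₁, u₂⟩, ⟨v₁, v₂⟩, rfl⟩ : ∃ u v, M = {u, v} :=
    card_eq_two.1 (by rw [← card_map Prod.fst, h₁]; rfl)
  rw [insert_eq_cons, map_cons, map_singleton, ← insert_eq_cons, pair_eq_pair_iff] at h₁ h₂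
  rcases h₁ with ⟨rfl, rfl⟩ | ⟨rfl, rfl⟩ <;> rcases h₂ with ⟨rfl, rfl⟩ | ⟨rfl, rfl⟩
  · exact .inl rfl
  · exact .inr (pair_comm _ _)
  · exact .inr rfl
  · exact .inl (pair_comm _ _)

end Multiset

namespace CompAB

theorem src_injective : Function.Injective CompAB.src := by
  decide

variable {T : DegComputad} (p : T ⟶ CompA) (q : T ⟶ CompB)

theorem exists_src_eq (e : T.C3) :
    ∃ i, CompAB.src i = (T.src e).map fun t => (p.f2 t, q.f2 t) := by
  have hA : ((T.src e).map fun t => (p.f2 t, q.f2 t)).map Prod.fst = {0, 1} :=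
    (Multiset.map_map _ _ _).trans (p.src_comm e).symm
  have hB : ((T.src e).map fun t => (p.f2 t, q.f2 t)).map Prod.snd = {0, 1} :=
    (Multiset.map_map _ _ _).trans (q.src_comm e).symm
  rcases Multiset.eq_pair_or_eq_pair_of_map_fst_of_map_snd hA hB with h | h
  · exact ⟨0, h.symm⟩
  · exact ⟨1, h.symm⟩

theorem map_tgt_eq (e : T.C3) : (T.tgt e).map (fun t => (p.f2 t, q.f2 t)) = {(2, 2)} := by
  have hA : ((T.tgt e).map fun t => (p.f2 t, q.f2 t)).map Prod.fst = {2} :=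
    (Multiset.map_map _ _ _).trans (p.tgt_comm e).symm
  have hB : ((T.tgt e).map fun t => (p.f2 t, q.f2 t)).map Prod.snd = {2} :=
    (Multiset.map_map _ _ _).trans (q.tgt_comm e).symm
  exact Multiset.eq_singleton_of_map_fst_of_map_snd hA hB

noncomputable def lift : T ⟶ CompAB where
  f2 t := (p.f2 t, q.f2 t)
  f3 e := (exists_src_eq p q e).choose
  src_comm e := (exists_src_eq p q e).choose_spec
  tgt_comm e := (map_tgt_eq p q e).symm

theorem lift_projA : lift p q ≫ projA = p :=
  DegComputad.Hom.ext rfl (Subsingleton.elim _ _)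

theorem lift_projB : lift p q ≫ projB = q :=
  DegComputad.Hom.ext rfl (Subsingleton.elim _ _)

theorem hom_ext {m m' : T ⟶ CompAB} (hA : m ≫ projA = m' ≫ projA)
    (hB : m ≫ projB = m' ≫ projB) : m = m' := by
  have hf2 : m.f2 = m'.f2 := funext fun t =>
    Prod.ext (congrFun (congrArg DegComputad.Hom.f2 hA) t)
      (congrFun (congrArg DegComputad.Hom.f2 hB) t)
  refine DegComputad.Hom.ext hf2 (funext fun e => src_injective ?_)
  rw [m.src_comm, m'.src_comm, hf2]

end CompAB

/-- With `A` and `B` the computads with three 2-cells and one 3-cell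
(`f : a₁·a₂ → a₃`, resp. `g : b₁·b₂ → b₃`), the explicitly described computad
`CompAB` — nine 2-cells `(aᵢ,bⱼ)` and exactly two 3-cells, one with source
`(a₁,b₁)·(a₂,b₂)` and one with source `(a₂,b₁)·(a₁,b₂)`, both with target
`(a₃,b₃)` — together with the evident projections, is a categorical product
of `A` and `B` in the category of 2-degenerate 3-computads. -/
theorem stmt3 : Nonempty (IsLimit (BinaryFan.mk projA projB)) :=
  ⟨BinaryFan.isLimitMk (fun s => CompAB.lift s.fst s.snd)
    (fun _ => CompAB.lift_projA _ _) (fun _ => CompAB.lift_projB _ _)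
    fun _ _ hA hB => CompAB.hom_ext (hA.trans (CompAB.lift_projA _ _).symm)
      (hB.trans (CompAB.lift_projB _ _).symm)⟩
end

section
/- Let E be the 2-degenerate 3-computad with 2-cells {x,y} and no 3-cells, A the one with 2-cells {a₁,a₂,a₃} and one 3-cell f : a₁·a₂ → a₃, and α₁, α₂ : E → A the morphisms with α₁(x)=a₁, α₂(x)=a₂, α₁(y)=α₂(y)=a₃. Then the coequalizer C of α₁ and α₂ has exactly two 2-cells ā, a₃ and exactly one 3-cell f̄ : ā·ā → a₃. -/
open CategoryTheory

/-- The computad `E`: two 2-cells `x,y` (as `0,1`) and no 3-cells. -/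
abbrev CompE : DegComputad := ⟨Fin 2, Empty, fun e => e.elim, fun e => e.elim⟩

/-- The morphism `α₁ : E ⟶ A`, `x ↦ a₁`, `y ↦ a₃`. -/
def alpha1 : CompE ⟶ CompA := ⟨![0, 2], fun e => e.elim, fun e => e.elim, fun e => e.elim⟩

/-- The morphism `α₂ : E ⟶ A`, `x ↦ a₂`, `y ↦ a₃`. -/
def alpha2 : CompE ⟶ CompA := ⟨![1, 2], fun e => e.elim, fun e => e.elim, fun e => e.elim⟩

/-- The coequalizer `C` of `α₁, α₂`: two 2-cells `ā, a₃` (as `0,1`) and one 3-cell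
`f̄ : ā·ā → a₃`. -/
abbrev CompC : DegComputad := ⟨Fin 2, Unit, fun _ => {0, 0}, fun _ => {1}⟩

/-- The quotient morphism `A ⟶ C`, identifying `a₁` and `a₂`. -/
def qmap : CompA ⟶ CompC := ⟨![0, 0, 1], fun _ => (), by decide, by decide⟩

open CategoryTheory.Limits

/-!
Coequalizers of 2-degenerate 3-computads are computed levelwise: if `π` is a coequalizer of sets
on 2-cells and on 3-cells, a cofork `s` descends to maps `d₂, d₃` on cells, and these respect
boundaries because every 3-cell of the target is hit by `π`. For `α₁, α₂` the 2-cells `a₁, a₂`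
get identified while `a₃` is identified only with itself, and since `E` has no 3-cells, `π` is a
bijection on 3-cells; the boundary `a₁·a₂` of `f` becomes `ā·ā`.
-/

structure Function.IsCoequalizer {α β γ : Type} (f g : α → β) (p : β → γ) : Prop where
  comp_eq : p ∘ f = p ∘ g
  surjective : p.Surjective
  exists_desc : ∀ {Y : Type} (u : β → Y), u ∘ f = u ∘ g → ∃ v : γ → Y, v ∘ p = u

theorem Function.isCoequalizer_of_bijective {α β γ : Type} {f : α → β} {p : β → γ}
    (hp : p.Bijective) : Function.IsCoequalizer f f p where
  comp_eq := rfl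
  surjective := hp.surjective
  exists_desc u _ := ⟨u ∘ (Equiv.ofBijective p hp).symm, by funext b; simp⟩

namespace DegComputad

variable {A C X : DegComputad}

theorem Hom.exists_comp_eq_of_surjective {π : A ⟶ C} (hπ : π.f3.Surjective) (k : A ⟶ X)
    {d₂ : C.C2 → X.C2} {d₃ : C.C3 → X.C3} (h₂ : d₂ ∘ π.f2 = k.f2) (h₃ : d₃ ∘ π.f3 = k.f3) :
    ∃ d : C ⟶ X, π ≫ d = k := by
  obtain ⟨k₂, k₃, hsrc, htgt⟩ := k
  subst h₂ h₃
  refine ⟨⟨d₂, d₃, fun e => ?_, fun e => ?_⟩, rfl⟩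
  · obtain ⟨a, rfl⟩ := hπ e
    rw [π.src_comm, Multiset.map_map]
    exact hsrc a
  · obtain ⟨a, rfl⟩ := hπ e
    rw [π.tgt_comm, Multiset.map_map]
    exact htgt a

theorem epi_of_surjective {π : A ⟶ C} (h₂ : π.f2.Surjective) (h₃ : π.f3.Surjective) :
    Epi π where
  left_cancellation _ _ h := Hom.ext (h₂.injective_comp_right (congrArg Hom.f2 h))
    (h₃.injective_comp_right (congrArg Hom.f3 h))

noncomputable def isColimitCoforkOfIsCoequalizer {E : DegComputad} {f g : E ⟶ A} {π : A ⟶ C}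
    (w : f ≫ π = g ≫ π) (h₂ : Function.IsCoequalizer f.f2 g.f2 π.f2)
    (h₃ : Function.IsCoequalizer f.f3 g.f3 π.f3) : IsColimit (Cofork.ofπ π w) :=
  Cofork.IsColimit.ofExistsUnique fun s => by
    obtain ⟨d₂, hd₂⟩ := h₂.exists_desc s.π.f2 (congrArg Hom.f2 s.condition)
    obtain ⟨d₃, hd₃⟩ := h₃.exists_desc s.π.f3 (congrArg Hom.f3 s.condition)
    obtain ⟨d, hd⟩ := Hom.exists_comp_eq_of_surjective h₃.surjective s.π hd₂ hd₃
    have := epi_of_surjective h₂.surjective h₃.surjective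
    exact ⟨d, hd, fun m hm => cancel_epi π |>.mp (hm.trans hd.symm)⟩

end DegComputad

theorem qmap_f2_isCoequalizer : Function.IsCoequalizer alpha1.f2 alpha2.f2 qmap.f2 where
  comp_eq := by decide
  surjective := by decide
  exists_desc u hu := ⟨![u 0, u 2], by
    funext i
    fin_cases i
    exacts [rfl, congrFun hu 0, rfl]⟩

theorem qmap_f3_isCoequalizer : Function.IsCoequalizer alpha1.f3 alpha2.f3 qmap.f3 := by
  rw [Subsingleton.elim alpha1.f3 alpha2.f3]
  exact Function.isCoequalizer_of_bijective ⟨fun _ _ _ => rfl, fun _ => ⟨(), rfl⟩⟩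

/-- The coequalizer of `α₁, α₂ : E ⟶ A` is the computad `C` with exactly two 2-cells
`ā, a₃` and exactly one 3-cell `f̄ : ā·ā → a₃`, via the quotient map identifying
`a₁` with `a₂`. -/
theorem stmt6 : ∃ w : alpha1 ≫ qmap = alpha2 ≫ qmap,
    Nonempty (IsColimit (Cofork.ofπ qmap w)) :=
  have w := DegComputad.Hom.ext qmap_f2_isCoequalizer.comp_eq qmap_f3_isCoequalizer.comp_eq
  ⟨w, ⟨DegComputad.isColimitCoforkOfIsCoequalizer w qmap_f2_isCoequalizer
    qmap_f3_isCoequalizer⟩⟩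
end

section
/- With E, A, α₁, α₂ as above and B the computad with 2-cells {b₁,b₂,b₃} and one 3-cell g : b₁·b₂ → b₃, the coequalizer P of α₁ × id_B, α₂ × id_B : E × B → A × B has exactly two 3-cells, both with source (ā,b₁)·(ā,b₂) and target (a₃,b₃). -/
open CategoryTheory

/-- The product `E × B`: 2-cells `(x,bⱼ)`, `(y,bⱼ)`, and no 3-cells. -/
abbrev CompEB : DegComputad := ⟨Fin 2 × Fin 3, Empty, fun e => e.elim, fun e => e.elim⟩

/-- The morphism `α₁ × id_B : E × B ⟶ A × B`. -/
def alpha1B : CompEB ⟶ CompAB :=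
  ⟨Prod.map ![0, 2] id, fun e => e.elim, fun e => e.elim, fun e => e.elim⟩

/-- The morphism `α₂ × id_B : E × B ⟶ A × B`. -/
def alpha2B : CompEB ⟶ CompAB :=
  ⟨Prod.map ![1, 2] id, fun e => e.elim, fun e => e.elim, fun e => e.elim⟩

open CategoryTheory.Limits

/-!
The cofork condition identifies `(a₁,bⱼ)` with `(a₂,bⱼ)` for every `j`, while `E × B` has
no 3-cells, so nothing is identified among the 3-cells. Hence the coequalizer is the computad `P` with 2-cells `{ā, a₃} × {b₁,b₂,b₃}`
and the two 3-cells of `A × B`, whose sources `(a₁,b₁)·(a₂,b₂)` and `(a₂,b₁)·(a₁,b₂)`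
both become `(ā,b₁)·(ā,b₂)`. Any other coequalizer is isomorphic to `P` under `A × B`. -/

lemma DegComputad.f3_bijective_of_isIso {A B : DegComputad} (f : A ⟶ B) [IsIso f] :
    Function.Bijective f.f3 :=
  Function.bijective_iff_has_inverse.mpr ⟨(inv f).f3,
    congrFun (congrArg DegComputad.Hom.f3 (IsIso.hom_inv_id f)),
    congrFun (congrArg DegComputad.Hom.f3 (IsIso.inv_hom_id f))⟩

/-- The 2-cells `(ā, bⱼ)` and `(a₃, bⱼ)` are encoded as `(0, j)` and `(1, j)`. -/
abbrev CompP : DegComputad :=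
  ⟨Fin 2 × Fin 3, Fin 2, fun _ => {(0, 0), (0, 1)}, fun _ => {(1, 2)}⟩

def projP : CompAB ⟶ CompP :=
  ⟨Prod.map ![0, 0, 1] id, id, by decide, by decide⟩

lemma projP_condition : alpha1B ≫ projP = alpha2B ≫ projP :=
  DegComputad.Hom.ext (by decide) (funext fun e => e.elim)

section Cofork

variable {Q : DegComputad} (π : CompAB ⟶ Q)

lemma f2_zero_eq_f2_one (w : alpha1B ≫ π = alpha2B ≫ π) (j : Fin 3) :
    π.f2 (0, j) = π.f2 (1, j) :=
  congrFun (congrArg DegComputad.Hom.f2 w) (0, j)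

lemma map_src_eq (w : alpha1B ≫ π = alpha2B ≫ π) (e : Fin 2) :
    Multiset.map π.f2 (CompAB.src e) = {π.f2 (0, 0), π.f2 (0, 1)} := by
  have h₀ := f2_zero_eq_f2_one π w 0
  have h₁ := f2_zero_eq_f2_one π w 1
  fin_cases e <;> simp [h₀, h₁]

lemma map_tgt_eq (e : Fin 2) : Multiset.map π.f2 (CompAB.tgt e) = {π.f2 (2, 2)} :=
  Multiset.map_singleton _ _

/-- `ā` lifts to `a₁`. -/
def descP (w : alpha1B ≫ π = alpha2B ≫ π) : CompP ⟶ Q where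
  f2 p := π.f2 (![0, 2] p.1, p.2)
  f3 := π.f3
  src_comm e := (π.src_comm e).trans (map_src_eq π w e)
  tgt_comm e := (π.tgt_comm e).trans (map_tgt_eq π e)

lemma projP_descP (w : alpha1B ≫ π = alpha2B ≫ π) : projP ≫ descP π w = π := by
  refine DegComputad.Hom.ext (funext fun ⟨i, j⟩ => ?_) rfl
  fin_cases i
  · rfl
  · exact f2_zero_eq_f2_one π w j
  · rfl

lemma descP_unique (w : alpha1B ≫ π = alpha2B ≫ π) (m : CompP ⟶ Q) (hm : projP ≫ m = π) :
    m = descP π w := by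
  refine DegComputad.Hom.ext (funext fun ⟨i, j⟩ => ?_)
    (congrArg DegComputad.Hom.f3 hm : (projP ≫ m).f3 = π.f3)
  fin_cases i
  · exact congrFun (congrArg DegComputad.Hom.f2 hm) (0, j)
  · exact congrFun (congrArg DegComputad.Hom.f2 hm) (2, j)

end Cofork

def projPIsColimit : IsColimit (Cofork.ofπ projP projP_condition) :=
  Cofork.IsColimit.mk _ (fun t => descP t.π t.condition)
    (fun t => projP_descP t.π t.condition) (fun t m hm => descP_unique t.π t.condition m hm)

/-- The coequalizer `P` of `α₁ × id_B, α₂ × id_B : E × B ⟶ A × B` has exactly two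
3-cells (the images of the two 3-cells of `A × B`), both with source
`(ā,b₁)·(ā,b₂)` and target `(a₃,b₃)`; here `(ā,bⱼ)` denotes the common image of
`(a₁,bⱼ)` and `(a₂,bⱼ)`. -/
theorem stmt7 (Q : DegComputad) (π : CompAB ⟶ Q)
    (w : alpha1B ≫ π = alpha2B ≫ π) (h : Nonempty (IsColimit (Cofork.ofπ π w))) :
    Function.Bijective π.f3 ∧
    (∀ j : Fin 3, π.f2 (0, j) = π.f2 (1, j)) ∧
    (∀ e : Fin 2, Q.src (π.f3 e) = {π.f2 (0, 0), π.f2 (0, 1)}) ∧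
    (∀ e : Fin 2, Q.tgt (π.f3 e) = {π.f2 (2, 2)}) := by
  obtain ⟨hc⟩ := h
  have hfac : projP ≫ (projPIsColimit.coconePointUniqueUpToIso hc).hom = π :=
    projPIsColimit.comp_coconePointUniqueUpToIso_hom hc WalkingParallelPair.one
  refine ⟨?_, f2_zero_eq_f2_one π w, fun e => (π.src_comm e).trans (map_src_eq π w e),
    fun e => (π.tgt_comm e).trans (map_tgt_eq π e)⟩
  rw [← hfac]
  exact DegComputad.f3_bijective_of_isIso (projPIsColimit.coconePointUniqueUpToIso hc).hom
end

section
/- There exists a 2-degenerate 3-computad B such that the endofunctor (− × B) on the category of 2-degenerate 3-computads does not preserve coequalizers; consequently (− × B) has no right adjoint and the category of 2-degenerate 3-computads is not cartesian closed. -/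
open CategoryTheory

open CategoryTheory.Limits

/-!
Let `B = binaryCell` (one 3-cell `g : b₁·b₂ → b₃`) and let `Q = foldedCell` be the coequalizer of
the two 2-cells `b₁, b₂` of `B`: it has one 3-cell `x·x → y`. A coequalizer of maps out of a
computad without 3-cells only glues 2-cells, so its projection is injective on 3-cells. If `− × B`
preserved this coequalizer, `B × B → Q × B` would therefore be injective on 3-cells. But `B × B`
has two 3-cells over `(g, g)`, the images of `(id, id), (id, swap) : B → B × B`, with sources
`{(b₁,b₁), (b₂,b₂)}` and `{(b₁,b₂), (b₂,b₁)}`, whereas `Q × B` has only one: each of its 3-cells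
comes from a map `B → Q × B`, there is only one map `B → Q`, and the two maps `B → B` differ by
the swap of `B`.
-/

namespace CategoryTheory.CartesianMonoidalCategory

variable {C : Type*} [Category C] [CartesianMonoidalCategory C]

def tensorLeftSnd (X : C) : MonoidalCategory.tensorLeft X ⟶ 𝟭 C where
  app := snd X
  naturality _ _ f := whiskerLeft_snd X f

def tensorLeftIsLimit (X A : C) :
    IsLimit (BinaryFan.mk ((tensorLeftSnd X).app A) (fst X A)) :=
  BinaryFan.isLimitFlip (tensorProductIsBinaryProduct X A)

end CategoryTheory.CartesianMonoidalCategory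

namespace DegComputad

@[ext]
lemma hom_ext {A B : DegComputad} {f g : A ⟶ B} (h₂ : f.f2 = g.f2) (h₃ : f.f3 = g.f3) :
    f = g :=
  Hom.ext h₂ h₃

lemma card_src_f3 {A B : DegComputad} (f : A ⟶ B) (e : A.C3) :
    Multiset.card (B.src (f.f3 e)) = Multiset.card (A.src e) := by
  rw [f.src_comm, Multiset.card_map]

lemma card_tgt_f3 {A B : DegComputad} (f : A ⟶ B) (e : A.C3) :
    Multiset.card (B.tgt (f.f3 e)) = Multiset.card (A.tgt e) := by
  rw [f.tgt_comm, Multiset.card_map]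

section Coequalizer

variable {X Y : DegComputad} (u v : X ⟶ Y)

def CoeqRel (a b : Y.C2) : Prop := ∃ c, u.f2 c = a ∧ v.f2 c = b

/-- When `X` has no 3-cells, the coequalizer of `u, v : X ⟶ Y` only glues the 2-cells of `Y`. -/
abbrev coeq : DegComputad where
  C2 := Quot (CoeqRel u v)
  C3 := Y.C3
  src e := (Y.src e).map (Quot.mk _)
  tgt e := (Y.tgt e).map (Quot.mk _)

def coeqπ : Y ⟶ coeq u v := ⟨Quot.mk _, id, fun _ => rfl, fun _ => rfl⟩

variable [IsEmpty X.C3]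

lemma coeqπ_condition : u ≫ coeqπ u v = v ≫ coeqπ u v := by
  ext c
  · exact Quot.sound ⟨c, rfl, rfl⟩
  · exact isEmptyElim c

def coeqDesc (s : Cofork u v) : coeq u v ⟶ s.pt where
  f2 := Quot.lift s.π.f2 <| by
    rintro _ _ ⟨c, rfl, rfl⟩
    exact congrFun (congrArg Hom.f2 s.condition) c
  f3 := s.π.f3
  src_comm e := by simp only [coeq, Multiset.map_map]; exact s.π.src_comm e
  tgt_comm e := by simp only [coeq, Multiset.map_map]; exact s.π.tgt_comm e

def coeqIsColimit : IsColimit (Cofork.ofπ (coeqπ u v) (coeqπ_condition u v)) :=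
  Cofork.IsColimit.mk _ (coeqDesc u v) (fun _ => rfl) fun s m hm => by
    ext x
    · induction x using Quot.ind with
      | mk c => exact congrFun (congrArg Hom.f2 hm) c
    · exact congrFun (congrArg Hom.f3 hm) x

/-- Any coequalizer of `u` and `v` maps onto `coeq u v`, whose projection is the identity on
3-cells. -/
theorem injective_f3_of_isColimit {c : Cofork u v} (hc : IsColimit c) :
    Function.Injective c.π.f3 :=
  Function.LeftInverse.injective (g := (hc.desc (Cofork.ofπ _ (coeqπ_condition u v))).f3)
    fun e => congrFun (congrArg Hom.f3 (Cofork.IsColimit.π_desc hc)) e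

end Coequalizer

def twoCell : DegComputad := ⟨Unit, Empty, isEmptyElim, isEmptyElim⟩

instance : IsEmpty twoCell.C3 := inferInstanceAs (IsEmpty Empty)

/-- The computad `B` of the statement, with `b₁, b₂, b₃` renamed `0, 1, 2`. -/
abbrev binaryCell : DegComputad := ⟨Fin 3, Unit, fun _ => {0, 1}, fun _ => {2}⟩

namespace binaryCell

def swap : binaryCell ⟶ binaryCell := ⟨![1, 0, 2], id, by decide, by decide⟩

def left : twoCell ⟶ binaryCell := ⟨fun _ => 0, isEmptyElim, isEmptyElim, isEmptyElim⟩

def right : twoCell ⟶ binaryCell := ⟨fun _ => 1, isEmptyElim, isEmptyElim, isEmptyElim⟩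

lemma swap_comp_swap : swap ≫ swap = 𝟙 _ := by
  ext c
  fin_cases c <;> rfl

lemma src_f3 {A : DegComputad} (u : binaryCell ⟶ A) : A.src (u.f3 ()) = {u.f2 0, u.f2 1} := by
  simp [u.src_comm]

lemma tgt_f3 {A : DegComputad} (u : binaryCell ⟶ A) : A.tgt (u.f3 ()) = {u.f2 2} := by
  simp [u.tgt_comm]

lemma eq_id_or_swap (v : binaryCell ⟶ binaryCell) : v = 𝟙 _ ∨ v = swap := by
  have pair : ∀ a b : Fin 3, ({a, b} : Multiset (Fin 3)) = {0, 1} →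
      a = 0 ∧ b = 1 ∨ a = 1 ∧ b = 0 := by decide
  have h₂ : v.f2 2 = 2 := Multiset.singleton_inj.mp (tgt_f3 v).symm
  rcases pair _ _ (src_f3 v).symm with ⟨h₀, h₁⟩ | ⟨h₀, h₁⟩
  · left
    ext c
    fin_cases c <;> simp [h₀, h₁, h₂]
  · right
    ext c
    fin_cases c <;> simp [swap, h₀, h₁, h₂]

lemma exists_hom_f3_eq {A : DegComputad} (e : A.C3) (hs : Multiset.card (A.src e) = 2)
    (ht : Multiset.card (A.tgt e) = 1) : ∃ u : binaryCell ⟶ A, u.f3 () = e := by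
  obtain ⟨a, b, hab⟩ := Multiset.card_eq_two.mp hs
  obtain ⟨c, hc⟩ := Multiset.card_eq_one.mp ht
  exact ⟨⟨![a, b, c], fun _ => e, fun _ => by simp [hab], fun _ => by simp [hc]⟩, rfl⟩

end binaryCell

abbrev foldedCell : DegComputad := coeq binaryCell.left binaryCell.right

instance : Subsingleton (binaryCell ⟶ foldedCell) := by
  have glue : (Quot.mk _ 1 : foldedCell.C2) = Quot.mk _ 0 :=
    (Quot.sound (r := CoeqRel binaryCell.left binaryCell.right) ⟨(), rfl, rfl⟩).symm
  have f2_eq (w : binaryCell ⟶ foldedCell) : w.f2 = ![Quot.mk _ 0, Quot.mk _ 0, Quot.mk _ 2] := by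
    have hs : ({w.f2 0, w.f2 1} : Multiset foldedCell.C2) = {Quot.mk _ 0, Quot.mk _ 0} := by
      rw [← binaryCell.src_f3]
      show Multiset.map (Quot.mk _) ({0, 1} : Multiset (Fin 3)) = _
      simp [glue]
    have h₀ : w.f2 0 ∈ ({Quot.mk _ 0, Quot.mk _ 0} : Multiset foldedCell.C2) := by simp [← hs]
    have h₁ : w.f2 1 ∈ ({Quot.mk _ 0, Quot.mk _ 0} : Multiset foldedCell.C2) := by simp [← hs]
    simp only [Multiset.insert_eq_cons, Multiset.mem_cons, or_self, Multiset.mem_singleton] at h₀ h₁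
    have h₂ : Quot.mk _ 2 = w.f2 2 := Multiset.singleton_inj.mp (binaryCell.tgt_f3 w)
    funext i
    fin_cases i <;> simp_all
  exact ⟨fun w w' => hom_ext ((f2_eq w).trans (f2_eq w').symm) (funext fun _ => rfl)⟩

theorem subsingleton_C3_of_isLimit {A : DegComputad} {pA : A ⟶ foldedCell} {qA : A ⟶ binaryCell}
    (h : IsLimit (BinaryFan.mk pA qA)) : Subsingleton A.C3 := by
  have normal (e : A.C3) : ∃ v : binaryCell ⟶ A, v ≫ qA = 𝟙 _ ∧ v.f3 () = e := by
    obtain ⟨u, rfl⟩ := binaryCell.exists_hom_f3_eq e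
      (by rw [← card_src_f3 pA]; rfl) (by rw [← card_tgt_f3 pA]; rfl)
    rcases binaryCell.eq_id_or_swap (u ≫ qA) with hu | hu
    · exact ⟨u, hu, rfl⟩
    · exact ⟨binaryCell.swap ≫ u, by rw [Category.assoc, hu, binaryCell.swap_comp_swap], rfl⟩
  refine ⟨fun e e' => ?_⟩
  obtain ⟨v, hv, rfl⟩ := normal e
  obtain ⟨v', hv', rfl⟩ := normal e'
  rw [show v = v' from BinaryFan.IsLimit.hom_ext h
    (Subsingleton.elim (α := binaryCell ⟶ foldedCell) _ _) (hv.trans hv'.symm)]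

theorem nontrivial_C3_of_isLimit {P : DegComputad} {r s : P ⟶ binaryCell}
    (h : IsLimit (BinaryFan.mk r s)) : Nontrivial P.C3 := by
  have src_pairs (u : binaryCell ⟶ P) : (P.src (u.f3 ())).map (fun c => (r.f2 c, s.f2 c)) =
      {((u ≫ r).f2 0, (u ≫ s).f2 0), ((u ≫ r).f2 1, (u ≫ s).f2 1)} := by
    simp [binaryCell.src_f3]
  obtain ⟨l₁, h₁r, h₁s⟩ : ∃ l : binaryCell ⟶ P, l ≫ r = 𝟙 _ ∧ l ≫ s = 𝟙 _ :=
    ⟨_, (BinaryFan.IsLimit.lift' h _ _).2⟩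
  obtain ⟨l₂, h₂r, h₂s⟩ : ∃ l : binaryCell ⟶ P, l ≫ r = 𝟙 _ ∧ l ≫ s = binaryCell.swap :=
    ⟨_, (BinaryFan.IsLimit.lift' h _ _).2⟩
  refine ⟨l₁.f3 (), l₂.f3 (), fun heq => ?_⟩
  have := src_pairs l₂
  rw [← heq, src_pairs l₁, h₁r, h₁s, h₂r, h₂s] at this
  exact absurd this (by decide)

theorem not_preservesCoequalizers_of_isLimit (F : DegComputad ⥤ DegComputad)
    (p : F ⟶ 𝟭 DegComputad) (q : ∀ A, F.obj A ⟶ binaryCell)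
    (hlim : ∀ A, Nonempty (IsLimit (BinaryFan.mk (p.app A) (q A)))) :
    ¬ Nonempty (PreservesColimitsOfShape WalkingParallelPair F) := by
  rintro ⟨_⟩
  have : IsEmpty (F.obj twoCell).C3 := ⟨fun e => Empty.elim ((p.app twoCell).f3 e)⟩
  have hinj : Function.Injective (F.map (coeqπ binaryCell.left binaryCell.right)).f3 :=
    injective_f3_of_isColimit _ _ <|
    isColimitCoforkMapOfIsColimit F _ (coeqIsColimit binaryCell.left binaryCell.right)
  have := subsingleton_C3_of_isLimit (hlim foldedCell).some
  have := nontrivial_C3_of_isLimit (hlim binaryCell).some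
  have := hinj.subsingleton
  exact false_of_nontrivial_of_subsingleton (F.obj binaryCell).C3

theorem not_nonempty_adjunction_of_isLimit (F : DegComputad ⥤ DegComputad)
    (p : F ⟶ 𝟭 DegComputad) (q : ∀ A, F.obj A ⟶ binaryCell)
    (hlim : ∀ A, Nonempty (IsLimit (BinaryFan.mk (p.app A) (q A)))) (G : DegComputad ⥤ DegComputad) :
    ¬ Nonempty (F ⊣ G) := fun ⟨adj⟩ =>
  have := adj.leftAdjoint_preservesColimits
  not_preservesCoequalizers_of_isLimit F p q hlim ⟨inferInstance⟩

open CartesianMonoidalCategory in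
theorem isEmpty_monoidalClosed [CartesianMonoidalCategory DegComputad] :
    IsEmpty (MonoidalClosed DegComputad) :=
  ⟨fun _ => not_nonempty_adjunction_of_isLimit _ (tensorLeftSnd _) (fst _)
    (fun A => ⟨tensorLeftIsLimit _ A⟩) _ ⟨ihom.adjunction binaryCell⟩⟩

end DegComputad

/-- There is a 2-degenerate 3-computad `B` such that any functor `− × B` (i.e. any
functor equipped with natural projections making each value a product with `B`) fails
to preserve coequalizers; consequently no such functor has a right adjoint, and the
category of 2-degenerate 3-computads is not cartesian closed. -/
theorem stmt9 :
    ∃ B : DegComputad,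
      (∀ (F : DegComputad ⥤ DegComputad) (p : F ⟶ 𝟭 DegComputad)
          (q : ∀ A, F.obj A ⟶ B),
        (∀ A, Nonempty (IsLimit (BinaryFan.mk (p.app A) (q A)))) →
          ¬ Nonempty (PreservesColimitsOfShape WalkingParallelPair F) ∧
          ∀ G : DegComputad ⥤ DegComputad, ¬ Nonempty (F ⊣ G)) ∧
      ∀ (hfp : CartesianMonoidalCategory DegComputad),
        IsEmpty (@MonoidalClosed DegComputad _ hfp.toMonoidalCategory) := by
  exact ⟨DegComputad.binaryCell, fun F p q hlim =>
    ⟨DegComputad.not_preservesCoequalizers_of_isLimit F p q hlim,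
      DegComputad.not_nonempty_adjunction_of_isLimit F p q hlim⟩,
    fun _ => DegComputad.isEmpty_monoidalClosed⟩
end

section
/- Given morphisms u : Y → A, v : Y → B of 2-degenerate 3-computads (with A, B each having a single 3-cell as above), there exists a unique morphism k : Y → A × B with p∘k = u and q∘k = v, where on each 3-cell e with source y₁·y₂, k(e) = (f,g)₁ if (u(y₁),v(y₁)) ∈ {(a₁,b₁),(a₂,b₂)} and k(e) = (f,g)₂ otherwise. -/
open CategoryTheory

/-! The pairing `y ↦ (u y, v y)` is forced on 2-cells. A 3-cell `e` with source `y₁·y₂` is sent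
by `u` and by `v` to the unique 3-cell of `A` and of `B`, so `{u y₁, u y₂} = {v y₁, v y₂} = {0, 1}`
and the paired source is `{(0,0), (1,1)}` or `{(1,0), (0,1)}`: exactly the source of one of the
two 3-cells of `A × B`. Since these sources differ, `k(e)` is determined by them. -/

namespace DegComputad

variable {X Z : DegComputad}

lemma Hom.card_src (k : X ⟶ Z) (e : X.C3) :
    Multiset.card (Z.src (k.f3 e)) = Multiset.card (X.src e) := by
  rw [k.src_comm, Multiset.card_map]

lemma Hom.card_tgt (k : X ⟶ Z) (e : X.C3) :
    Multiset.card (Z.tgt (k.f3 e)) = Multiset.card (X.tgt e) := by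
  rw [k.tgt_comm, Multiset.card_map]

lemma Hom.src_eq_pair (k : X ⟶ Z) {e : X.C3} {y₁ y₂ : X.C2} (hs : X.src e = {y₁, y₂}) :
    Z.src (k.f3 e) = {k.f2 y₁, k.f2 y₂} := by
  simp [k.src_comm, hs]

lemma Hom.tgt_eq_singleton (k : X ⟶ Z) {e : X.C3} {t : X.C2} (ht : X.tgt e = {t}) :
    Z.tgt (k.f3 e) = {k.f2 t} := by
  simp [k.tgt_comm, ht]

lemma Hom.ext_of_injective_src (hZ : Function.Injective Z.src) {k l : X ⟶ Z}
    (h : k.f2 = l.f2) : k = l :=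
  Hom.ext h (funext fun e => hZ (by rw [k.src_comm, l.src_comm, h]))

lemma existsUnique_hom_of_f2 (hZ : Function.Injective Z.src) (g : X.C2 → Z.C2)
    (hg : ∀ e, ∃ c, Z.src c = (X.src e).map g ∧ Z.tgt c = (X.tgt e).map g) :
    ∃! k : X ⟶ Z, k.f2 = g := by
  choose c hsrc htgt using hg
  exact ⟨⟨g, c, hsrc, htgt⟩, rfl, fun l hl => Hom.ext_of_injective_src hZ hl⟩

end DegComputad

open DegComputad

lemma CompAB.src_injective_s13 : Function.Injective CompAB.src := by decide

lemma CompAB.exists_src_eq_pair : ∀ a₁ a₂ b₁ b₂ : Fin 3,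
    ({0, 1} : Multiset (Fin 3)) = {a₁, a₂} → ({0, 1} : Multiset (Fin 3)) = {b₁, b₂} →
    ∃ c, CompAB.src c = {(a₁, b₁), (a₂, b₂)} := by
  decide

lemma CompAB.src_zero_eq_pair_iff : ∀ a₁ a₂ b₁ b₂ : Fin 3,
    ({0, 1} : Multiset (Fin 3)) = {a₁, a₂} → ({0, 1} : Multiset (Fin 3)) = {b₁, b₂} →
    (CompAB.src 0 = {(a₁, b₁), (a₂, b₂)} ↔ (a₁, b₁) = (0, 0) ∨ (a₁, b₁) = (1, 1)) := by
  decide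

section Pairing

variable {Y : DegComputad} (u : Y ⟶ CompA) (v : Y ⟶ CompB)

lemma comp_proj_eq_iff (k : Y ⟶ CompAB) :
    k ≫ projA = u ∧ k ≫ projB = v ↔ k.f2 = fun y => (u.f2 y, v.f2 y) := by
  constructor
  · rintro ⟨rfl, rfl⟩
    rfl
  · intro h
    exact ⟨Hom.ext (by rw [comp_f2, h]; rfl) (Subsingleton.elim _ _),
      Hom.ext (by rw [comp_f2, h]; rfl) (Subsingleton.elim _ _)⟩

lemma exists_compAB_cell (e : Y.C3) :
    ∃ c, CompAB.src c = (Y.src e).map (fun y => (u.f2 y, v.f2 y)) ∧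
      CompAB.tgt c = (Y.tgt e).map (fun y => (u.f2 y, v.f2 y)) := by
  obtain ⟨y₁, y₂, hs⟩ := Multiset.card_eq_two.mp ((u.card_src e).symm.trans rfl)
  obtain ⟨t, ht⟩ := Multiset.card_eq_one.mp ((u.card_tgt e).symm.trans rfl)
  obtain ⟨c, hc⟩ := CompAB.exists_src_eq_pair _ _ _ _ (u.src_eq_pair hs) (v.src_eq_pair hs)
  have hu : 2 = u.f2 t := Multiset.singleton_inj.mp (u.tgt_eq_singleton ht)
  have hv : 2 = v.f2 t := Multiset.singleton_inj.mp (v.tgt_eq_singleton ht)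
  exact ⟨c, by rw [hc, hs]; simp, by simp [ht, ← hu, ← hv]⟩

end Pairing

/-- Given morphisms `u : Y ⟶ A`, `v : Y ⟶ B` (with `A`, `B` each having a single
3-cell), there is a unique morphism `k : Y ⟶ A × B` with `k ≫ p = u` and `k ≫ q = v`;
moreover on each 3-cell `e` with source `y₁·y₂`, `k(e)` is the first 3-cell `(f,g)₁`
of `A × B` precisely when `(u(y₁), v(y₁)) ∈ {(a₁,b₁), (a₂,b₂)}`, and the second
3-cell `(f,g)₂` otherwise. -/
theorem stmt13 (Y : DegComputad) (u : Y ⟶ CompA) (v : Y ⟶ CompB) :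
    (∃! k : Y ⟶ CompAB, k ≫ projA = u ∧ k ≫ projB = v) ∧
    (∀ k : Y ⟶ CompAB, k ≫ projA = u ∧ k ≫ projB = v →
      ∀ (e : Y.C3) (y₁ y₂ : Y.C2), Y.src e = {y₁, y₂} →
        (k.f3 e = 0 ↔
          ((u.f2 y₁, v.f2 y₁) = ((0 : Fin 3), (0 : Fin 3)) ∨
           (u.f2 y₁, v.f2 y₁) = (1, 1)))) := by
  refine ⟨?_, fun k hk e y₁ y₂ hs => ?_⟩
  · rw [existsUnique_congr (comp_proj_eq_iff u v)]
    exact existsUnique_hom_of_f2 CompAB.src_injective_s13 _ (exists_compAB_cell u v)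
  · have hsrc := k.src_eq_pair hs
    rw [(comp_proj_eq_iff u v k).mp hk] at hsrc
    rw [← CompAB.src_injective_s13.eq_iff, hsrc, eq_comm]
    exact CompAB.src_zero_eq_pair_iff _ _ _ _ (u.src_eq_pair hs) (v.src_eq_pair hs)
end

section
/- The forgetful functor from 2-degenerate 3-computads to pairs of sets (A₂, A₃) creates coequalizers but does not create products. -/
open CategoryTheory

open CategoryTheory.Limits

/-- The forgetful functor sending a 2-degenerate 3-computad to its pair of cell sets
`(A₂, A₃)`. -/
def forgetCells : DegComputad ⥤ (Type × Type) where
  obj A := (A.C2, A.C3)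
  map f := (TypeCat.ofHom f.f2, TypeCat.ofHom f.f3)

namespace Stmt15Aux

open CategoryTheory CategoryTheory.Limits

/-! ### Reflecting isomorphisms -/

instance : Functor.ReflectsIsomorphisms forgetCells := by
  constructor
  intro A B f hf
  let i := inv (forgetCells.map f)
  have h1 : forgetCells.map f ≫ i = 𝟙 _ := IsIso.hom_inv_id _
  have h2 : i ≫ forgetCells.map f = 𝟙 _ := IsIso.inv_hom_id _
  have h1a : ∀ x, i.1 (f.f2 x) = x := fun x => types_congr_hom (congrArg Prod.fst h1) x
  have h1b : ∀ x, i.2 (f.f3 x) = x := fun x => types_congr_hom (congrArg Prod.snd h1) x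
  have h2a : ∀ x, f.f2 (i.1 x) = x := fun x => types_congr_hom (congrArg Prod.fst h2) x
  have h2b : ∀ x, f.f3 (i.2 x) = x := fun x => types_congr_hom (congrArg Prod.snd h2) x
  refine ⟨⟨⟨i.1, i.2, ?_, ?_⟩, ?_, ?_⟩⟩
  · intro e
    have := f.src_comm (i.2 e)
    replace this := (congrArg B.src (h2b e)).symm.trans this
    rw [this]
    refine Eq.trans ?_ (Multiset.map_map _ _ _).symm
    conv_lhs => rw [show A.src (i.2 e) = Multiset.map id (A.src (i.2 e)) by simp]
    exact Multiset.map_congr rfl (fun x _ => (h1a x).symm)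
  · intro e
    have := f.tgt_comm (i.2 e)
    replace this := (congrArg B.tgt (h2b e)).symm.trans this
    rw [this]
    refine Eq.trans ?_ (Multiset.map_map _ _ _).symm
    conv_lhs => rw [show A.tgt (i.2 e) = Multiset.map id (A.tgt (i.2 e)) by simp]
    exact Multiset.map_congr rfl (fun x _ => (h1a x).symm)
  · exact DegComputad.Hom.ext (funext h1a) (funext h1b)
  · exact DegComputad.Hom.ext (funext h2a) (funext h2b)

/-! ### Explicit coequalizer construction -/

section Coeq

variable (K : WalkingParallelPair ⥤ DegComputad)

local notation "A" => K.obj WalkingParallelPair.zero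
local notation "B" => K.obj WalkingParallelPair.one
local notation "ff" => K.map WalkingParallelPairHom.left
local notation "gg" => K.map WalkingParallelPairHom.right

def r2 : (B).C2 → (B).C2 → Prop := fun x y => ∃ a, (ff).f2 a = x ∧ (gg).f2 a = y
def r3 : (B).C3 → (B).C3 → Prop := fun x y => ∃ a, (ff).f3 a = x ∧ (gg).f3 a = y

lemma mk2_eq (a : (A).C2) : Quot.mk (r2 K) ((ff).f2 a) = Quot.mk (r2 K) ((gg).f2 a) :=
  Quot.sound ⟨a, rfl, rfl⟩

def Qc : DegComputad where
  C2 := Quot (r2 K)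
  C3 := Quot (r3 K)
  src := Quot.lift (fun b => ((B).src b).map (Quot.mk (r2 K))) (by
    rintro x y ⟨a, rfl, rfl⟩
    rw [(ff).src_comm, (gg).src_comm, Multiset.map_map, Multiset.map_map]
    exact Multiset.map_congr rfl (fun c _ => mk2_eq K c))
  tgt := Quot.lift (fun b => ((B).tgt b).map (Quot.mk (r2 K))) (by
    rintro x y ⟨a, rfl, rfl⟩
    rw [(ff).tgt_comm, (gg).tgt_comm, Multiset.map_map, Multiset.map_map]
    exact Multiset.map_congr rfl (fun c _ => mk2_eq K c))

def qHom : (B) ⟶ Qc K :=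
  ⟨Quot.mk (r2 K), Quot.mk (r3 K), fun _ => rfl, fun _ => rfl⟩

lemma coeq_cond : (ff) ≫ qHom K = (gg) ≫ qHom K :=
  DegComputad.Hom.ext (funext fun a => Quot.sound ⟨a, rfl, rfl⟩)
    (funext fun a => Quot.sound ⟨a, rfl, rfl⟩)

def Qcocone : Cocone K where
  pt := Qc K
  ι := { app := fun j => match j with
          | WalkingParallelPair.zero => ff ≫ qHom K
          | WalkingParallelPair.one => qHom K
         naturality := by
          intro X Y h
          change WalkingParallelPairHom X Y at h
          cases h with
          | left => simp
          | right =>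
            simp only [Functor.const_obj_map, Category.comp_id]
            exact (coeq_cond K).symm
          | id => simp }

section Desc

variable (s : Cocone K)

lemma s_eq2 : ∀ a, (s.ι.app WalkingParallelPair.one).f2 ((ff).f2 a)
    = (s.ι.app WalkingParallelPair.one).f2 ((gg).f2 a) := by
  intro a
  have h1 := s.ι.naturality WalkingParallelPairHom.left
  have h2 := s.ι.naturality WalkingParallelPairHom.right
  have := h1.trans h2.symm
  exact congrFun (congrArg DegComputad.Hom.f2 this) a

lemma s_eq3 : ∀ a, (s.ι.app WalkingParallelPair.one).f3 ((ff).f3 a)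
    = (s.ι.app WalkingParallelPair.one).f3 ((gg).f3 a) := by
  intro a
  have h1 := s.ι.naturality WalkingParallelPairHom.left
  have h2 := s.ι.naturality WalkingParallelPairHom.right
  have := h1.trans h2.symm
  exact congrFun (congrArg DegComputad.Hom.f3 this) a

def descHom : Qc K ⟶ s.pt where
  f2 := Quot.lift (s.ι.app WalkingParallelPair.one).f2 (by
    rintro x y ⟨a, rfl, rfl⟩; exact s_eq2 K s a)
  f3 := Quot.lift (s.ι.app WalkingParallelPair.one).f3 (by
    rintro x y ⟨a, rfl, rfl⟩; exact s_eq3 K s a)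
  src_comm := by
    rintro ⟨b⟩
    refine Eq.trans ((s.ι.app WalkingParallelPair.one).src_comm b) ?_
    show _ = Multiset.map _ (Multiset.map _ _)
    exact (Multiset.map_map (Quot.lift (s.ι.app WalkingParallelPair.one).f2 _) (Quot.mk (r2 K)) _).symm
  tgt_comm := by
    rintro ⟨b⟩
    refine Eq.trans ((s.ι.app WalkingParallelPair.one).tgt_comm b) ?_
    show _ = Multiset.map _ (Multiset.map _ _)
    exact (Multiset.map_map (Quot.lift (s.ι.app WalkingParallelPair.one).f2 _) (Quot.mk (r2 K)) _).symm

end Desc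

def QcoconeIsColimit : IsColimit (Qcocone K) where
  desc s := descHom K s
  fac s j := by
    match j with
    | WalkingParallelPair.one => exact DegComputad.Hom.ext rfl rfl
    | WalkingParallelPair.zero =>
      have h1 := s.ι.naturality WalkingParallelPairHom.left
      simp only [Functor.const_obj_map, Category.comp_id] at h1
      exact (DegComputad.Hom.ext rfl rfl).trans h1
  uniq s m hm := by
    have h := hm WalkingParallelPair.one
    refine DegComputad.Hom.ext (funext ?_) (funext ?_)
    · rintro ⟨b⟩
      exact congrFun (congrArg DegComputad.Hom.f2 h) b
    · rintro ⟨b⟩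
      exact congrFun (congrArg DegComputad.Hom.f3 h) b

/-! The image cocone is a colimit in `Type × Type`. -/

def QmapIsColimit : IsColimit (Functor.mapCocone forgetCells (Qcocone K)) where
  desc s := by
    refine ⟨TypeCat.ofHom (Quot.lift (s.ι.app WalkingParallelPair.one).1 ?_),
            TypeCat.ofHom (Quot.lift (s.ι.app WalkingParallelPair.one).2 ?_)⟩
    · rintro x y ⟨a, rfl, rfl⟩
      have h1 := s.ι.naturality WalkingParallelPairHom.left
      have h2 := s.ι.naturality WalkingParallelPairHom.right
      exact types_congr_hom (congrArg Prod.fst (h1.trans h2.symm)) a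
    · rintro x y ⟨a, rfl, rfl⟩
      have h1 := s.ι.naturality WalkingParallelPairHom.left
      have h2 := s.ι.naturality WalkingParallelPairHom.right
      exact types_congr_hom (congrArg Prod.snd (h1.trans h2.symm)) a
  fac s j := by
    match j with
    | WalkingParallelPair.one => rfl
    | WalkingParallelPair.zero =>
      have h1 := s.ι.naturality WalkingParallelPairHom.left
      simp only [Functor.const_obj_map, Category.comp_id] at h1
      exact h1
  uniq s m hm := by
    have h := hm WalkingParallelPair.one
    refine Prod.ext (ConcreteCategory.hom_ext _ _ ?_) (ConcreteCategory.hom_ext _ _ ?_)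
    · rintro ⟨b⟩
      exact types_congr_hom (congrArg Prod.fst h) b
    · rintro ⟨b⟩
      exact types_congr_hom (congrArg Prod.snd h) b

end Coeq

def createsCoeq : CreatesColimitsOfShape WalkingParallelPair forgetCells where
  CreatesColimit {K} := createsColimitOfReflectsIso fun c t =>
    { liftedCocone := Qcocone K
      validLift := IsColimit.uniqueUpToIso (QmapIsColimit K) t
      makesColimit := QcoconeIsColimit K }

end Stmt15Aux

namespace Stmt15Aux

open CategoryTheory CategoryTheory.Limits WalkingPair

def A0 : DegComputad := ⟨Fin 3, PUnit, fun _ => {0, 1}, fun _ => {2}⟩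

def σ0 : A0 ⟶ A0 where
  f2 := fun i : Fin 3 => (if i = 0 then 1 else if i = 1 then 0 else i : Fin 3)
  f3 := id
  src_comm := fun _ =>
    (by decide : ({0, 1} : Multiset (Fin 3)) =
      Multiset.map (fun i : Fin 3 => if i = 0 then 1 else if i = 1 then 0 else i) {0, 1})
  tgt_comm := fun _ =>
    (by decide : ({2} : Multiset (Fin 3)) =
      Multiset.map (fun i : Fin 3 => if i = 0 then 1 else if i = 1 then 0 else i) {2})

/-- The candidate limit cone downstairs for the binary product of `A0` with itself. -/
def cone0 : Cone (pair A0 A0 ⋙ forgetCells) where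
  pt := (A0.C2 × A0.C2, PUnit)
  π := Discrete.natTrans fun j =>
    match j with
    | ⟨WalkingPair.left⟩ => (TypeCat.ofHom Prod.fst, TypeCat.ofHom fun _ => PUnit.unit)
    | ⟨WalkingPair.right⟩ => (TypeCat.ofHom Prod.snd, TypeCat.ofHom fun _ => PUnit.unit)

def cone0IsLimit : IsLimit cone0 where
  lift s := (TypeCat.ofHom fun x => ((s.π.app ⟨WalkingPair.left⟩).1 x, (s.π.app ⟨WalkingPair.right⟩).1 x),
    TypeCat.ofHom fun _ => PUnit.unit)
  fac s j := by
    obtain ⟨j⟩ := j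
    cases j <;> exact Prod.ext rfl (ConcreteCategory.hom_ext _ _ fun x => rfl)
  uniq s m hm := by
    refine Prod.ext (ConcreteCategory.hom_ext _ _ fun x => ?_) (ConcreteCategory.hom_ext _ _ fun x => rfl)
    refine Prod.ext ?_ ?_
    · exact types_congr_hom (congrArg Prod.fst (hm ⟨WalkingPair.left⟩)) x
    · exact types_congr_hom (congrArg Prod.fst (hm ⟨WalkingPair.right⟩)) x

theorem noCreateProd : ¬ Nonempty (CreatesLimitsOfShape (Discrete WalkingPair) forgetCells) := by
  rintro ⟨h⟩
  haveI := h
  -- lift the limit cone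
  let c : Cone (pair A0 A0) := liftLimit cone0IsLimit
  let hc : IsLimit c := liftedLimitIsLimit cone0IsLimit
  let t : IsLimit (Functor.mapCone forgetCells c) :=
    IsLimit.ofIsoLimit cone0IsLimit (liftedLimitMapsToOriginal cone0IsLimit).symm
  -- two cones upstairs
  let c1 : Cone (pair A0 A0) := BinaryFan.mk (𝟙 A0) (𝟙 A0)
  let c2 : Cone (pair A0 A0) := BinaryFan.mk (𝟙 A0) σ0
  let u1 : A0 ⟶ c.pt := hc.lift c1
  let u2 : A0 ⟶ c.pt := hc.lift c2
  have fac1l : u1 ≫ c.π.app ⟨WalkingPair.left⟩ = 𝟙 A0 := hc.fac c1 ⟨WalkingPair.left⟩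
  have fac1r : u1 ≫ c.π.app ⟨WalkingPair.right⟩ = 𝟙 A0 := hc.fac c1 ⟨WalkingPair.right⟩
  have fac2l : u2 ≫ c.π.app ⟨WalkingPair.left⟩ = 𝟙 A0 := hc.fac c2 ⟨WalkingPair.left⟩
  have fac2r : u2 ≫ c.π.app ⟨WalkingPair.right⟩ = σ0 := hc.fac c2 ⟨WalkingPair.right⟩
  -- u1.f3 and u2.f3 agree, by uniqueness in the limit downstairs
  have key : forgetCells.map u1 = (TypeCat.ofHom u1.f2, TypeCat.ofHom fun _ => u2.f3 PUnit.unit) := by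
    refine t.hom_ext fun j => ?_
    obtain ⟨j⟩ := j
    cases j <;> exact Prod.ext rfl (ConcreteCategory.hom_ext _ _ fun x => rfl)
  have hq : u1.f3 PUnit.unit = u2.f3 PUnit.unit :=
    types_congr_hom (congrArg Prod.snd key) PUnit.unit
  -- compare the sources
  have hs1 : c.pt.src (u1.f3 PUnit.unit)
      = {u1.f2 (0 : Fin 3), u1.f2 (1 : Fin 3)} := by
    refine (u1.src_comm PUnit.unit).trans ?_
    show Multiset.map u1.f2 ({0, 1} : Multiset (Fin 3)) = _
    rfl
  have hs2 : c.pt.src (u2.f3 PUnit.unit)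
      = {u2.f2 (0 : Fin 3), u2.f2 (1 : Fin 3)} := by
    refine (u2.src_comm PUnit.unit).trans ?_
    show Multiset.map u2.f2 ({0, 1} : Multiset (Fin 3)) = _
    rfl
  have hS : ({u1.f2 (0 : Fin 3), u1.f2 (1 : Fin 3)} : Multiset c.pt.C2)
      = {u2.f2 (0 : Fin 3), u2.f2 (1 : Fin 3)} := by
    rw [← hs1, ← hs2, hq]
  have hmem : u1.f2 (0 : Fin 3)
      ∈ ({u2.f2 (0 : Fin 3), u2.f2 (1 : Fin 3)} : Multiset c.pt.C2) := by
    rw [← hS]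
    simp
  have e1l : ∀ x : Fin 3, (c.π.app ⟨WalkingPair.left⟩).f2 (u1.f2 x) = x := fun x =>
    congrFun (congrArg DegComputad.Hom.f2 fac1l) x
  have e1r : ∀ x : Fin 3, (c.π.app ⟨WalkingPair.right⟩).f2 (u1.f2 x) = x := fun x =>
    congrFun (congrArg DegComputad.Hom.f2 fac1r) x
  have e2l : ∀ x : Fin 3, (c.π.app ⟨WalkingPair.left⟩).f2 (u2.f2 x) = x := fun x =>
    congrFun (congrArg DegComputad.Hom.f2 fac2l) x
  have e2r : ∀ x : Fin 3, (c.π.app ⟨WalkingPair.right⟩).f2 (u2.f2 x) = σ0.f2 x := fun x =>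
    congrFun (congrArg DegComputad.Hom.f2 fac2r) x
  rcases Multiset.mem_cons.mp hmem with h | h
  · -- u1.f2 0 = u2.f2 0 : apply the right projection
    have h2 := congrArg (c.π.app ⟨WalkingPair.right⟩).f2 h
    rw [e1r, e2r] at h2
    exact absurd h2 (show ¬(0 : Fin 3) = σ0.f2 (0 : Fin 3) from (by decide : ¬(0 : Fin 3) = 1))
  · have h' : u1.f2 (0 : Fin 3) = u2.f2 (1 : Fin 3) := by
      rwa [Multiset.mem_singleton] at h
    have h2 := congrArg (c.π.app ⟨WalkingPair.left⟩).f2 h'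
    rw [e1l, e2l] at h2
    exact absurd h2 (show ¬(0 : Fin 3) = (1 : Fin 3) by decide)

end Stmt15Aux

/-- The forgetful functor to pairs of sets creates coequalizers, but does not create
(binary) products. -/
theorem stmt15 :
    Nonempty (CreatesColimitsOfShape WalkingParallelPair forgetCells) ∧
    ¬ Nonempty (CreatesLimitsOfShape (Discrete WalkingPair) forgetCells) := by
  exact ⟨⟨Stmt15Aux.createsCoeq⟩, Stmt15Aux.noCreateProd⟩
end
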